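/- arXiv:2505.06824 — 2 statements merged into one kernel-verified Lean document; each statement's English description precedes it below -/
import Mathlib

section
/- (Validity of the axiom A_[][] for merging interventions.) For every causal deontic model M_D, all tuples X⃗, Y⃗ of distinct endogenous variables with values x⃗, y⃗, and every formula φ: M_D ⊨ [X⃗=x⃗][Y⃗=y⃗]φ if and only if M_D ⊨ [X⃗'=x⃗',Y⃗=y⃗]φ, where X⃗'=x⃗' is the restriction of X⃗=x⃗ to the variables in X⃗ that do not occur in Y⃗. -/
/-- A signature `(U, V, R)`: finite set of exogenous variables `U`, finite set of
endogenous variables `V` (disjoint from `U`, modelled by a sum type), and for each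
variable a finite nonempty range of values. -/
structure Signature where
  U : Type
  V : Type
  R : U ⊕ V → Type
  fintypeU : Fintype U
  fintypeV : Fintype V
  decEqU : DecidableEq U
  decEqV : DecidableEq V
  fintypeR : ∀ X, Fintype (R X)
  nonemptyR : ∀ X, Nonempty (R X)
  decEqR : ∀ X, DecidableEq (R X)

attribute [instance] Signature.fintypeU Signature.fintypeV Signature.decEqU
  Signature.decEqV Signature.fintypeR Signature.nonemptyR Signature.decEqR

/-- An assignment of values to all the variables. -/
abbrev Assignment (S : Signature) : Type := ∀ X : S.U ⊕ S.V, S.R X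

/-- An exogenous setting: an assignment of values to all exogenous variables. -/
abbrev ExoSetting (S : Signature) : Type := ∀ X : S.U, S.R (Sum.inl X)

/-- An assignment of values to all variables except `X` (i.e. `A^{-X}`). -/
abbrev CoAssignment (S : Signature) (X : S.U ⊕ S.V) : Type :=
  ∀ Y : S.U ⊕ S.V, Y ≠ X → S.R Y

/-- The restriction `A^{-X}` of an assignment. -/
def Assignment.minus {S : Signature} (A : Assignment S) (X : S.U ⊕ S.V) :
    CoAssignment S X := fun Y _ => A Y

/-- A set of structural functions: for each endogenous variable `X`, a function
giving the value of `X` from the values of all the other variables. -/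
abbrev StructFns (S : Signature) : Type :=
  ∀ X : S.V, CoAssignment S (Sum.inr X) → S.R (Sum.inr X)

/-- `A` complies with `F` iff `A(X) = f_X(A^{-X})` for every endogenous `X`. -/
def Complies (S : Signature) (F : StructFns S) (A : Assignment S) : Prop :=
  ∀ X : S.V, A (Sum.inr X) = F X (A.minus (Sum.inr X))

/-- `F` is recursive (acyclic): there is a strict total order on the variables such
that each `f_X` does not depend on the values of variables strictly above `X`. -/
def Recursive (S : Signature) (F : StructFns S) : Prop :=
  ∃ lt : (S.U ⊕ S.V) → (S.U ⊕ S.V) → Prop,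
    IsStrictTotalOrder (S.U ⊕ S.V) lt ∧
    ∀ X : S.V, ∀ B B' : CoAssignment S (Sum.inr X),
      (∀ Y (hne : Y ≠ Sum.inr X), lt Y (Sum.inr X) → B Y hne = B' Y hne) →
      F X B = F X B'

/-- An intervention tuple `X⃗ = x⃗`: a list of endogenous variables with values. -/
abbrev Ivn (S : Signature) : Type := List ((X : S.V) × S.R (Sum.inr X))

/-- The variables of an intervention tuple. -/
def Ivn.fsts {S : Signature} (l : Ivn S) : List S.V := l.map Sigma.fst

/-- The variables in the tuple are pairwise distinct. -/
def Ivn.Distinct {S : Signature} (l : Ivn S) : Prop := (l.map Sigma.fst).Nodup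

/-- The intervened structural functions `F_{X⃗ = x⃗}`: each `f_{X_i}` is replaced by
the constant function returning `x_i`; the other functions are unchanged. -/
noncomputable def applyIvn (S : Signature) (F : StructFns S) (l : Ivn S) : StructFns S :=
  fun X B =>
    if h : ∃ x : S.R (Sum.inr X), (⟨X, x⟩ : (Y : S.V) × S.R (Sum.inr Y)) ∈ l then h.choose
    else F X B

/-- Formulas of the language `L_D`:
atoms `X = x`, negation, conjunction, intervention formulas `[X⃗=x⃗]φ`,
priority formulas `X=x ≺ Y=y`, and context formulas `φ^u`. -/
inductive Formula (S : Signature) : Type where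
  | atom (X : S.U ⊕ S.V) (x : S.R X) : Formula S
  | neg (φ : Formula S) : Formula S
  | and (φ ψ : Formula S) : Formula S
  | intervene (l : Ivn S) (φ : Formula S) : Formula S
  | prec (X : S.U ⊕ S.V) (x : S.R X) (Y : S.U ⊕ S.V) (y : S.R Y) : Formula S
  | ctx (u : ExoSetting S) (φ : Formula S) : Formula S

def Formula.imp {S : Signature} (φ ψ : Formula S) : Formula S := .neg (.and φ (.neg ψ))

def Formula.or {S : Signature} (φ ψ : Formula S) : Formula S := .neg (.and (.neg φ) (.neg ψ))

def Formula.iffF {S : Signature} (φ ψ : Formula S) : Formula S := .and (φ.imp ψ) (ψ.imp φ)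

/-- Atoms `X = x`. -/
abbrev SAtom (S : Signature) : Type := (X : S.U ⊕ S.V) × S.R X

/-- A priority structure `P = (Φ, ≪)`: a set of atoms together with a
priority relation among atoms. -/
structure Priority (S : Signature) where
  dom : Set (SAtom S)
  lt : SAtom S → SAtom S → Prop

/-- The priority relation is a strict partial order (asymmetric and transitive). -/
def Priority.Strict {S : Signature} (P : Priority S) : Prop :=
  (∀ a b, P.lt a b → ¬ P.lt b a) ∧ (∀ a b c, P.lt a b → P.lt b c → P.lt a c)

open Classical in
/-- The unique assignment complying with `F` whose values on the exogenous
variables are given by `u` (when `F` is recursive it exists and is unique). -/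
noncomputable def solve (S : Signature) (F : StructFns S) (u : ExoSetting S) : Assignment S :=
  if h : ∃ A : Assignment S, Complies S F A ∧ ∀ X : S.U, A (Sum.inl X) = u X then h.choose
  else fun X => Classical.arbitrary (S.R X)

/-- Truth of a formula at structural functions `F`, priority `P` and actual
assignment `A`. -/
def Sat (S : Signature) : StructFns S → Priority S → Assignment S → Formula S → Prop
  | _, _, A, .atom X x => A X = x
  | F, P, A, .neg φ => ¬ Sat S F P A φ
  | F, P, A, .and φ ψ => Sat S F P A φ ∧ Sat S F P A ψ
  | F, P, A, .intervene l φ =>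
      Sat S (applyIvn S F l) P (solve S (applyIvn S F l) (fun X => A (Sum.inl X))) φ
  | _, P, _, .prec X x Y y => P.lt ⟨X, x⟩ ⟨Y, y⟩
  | F, P, _, .ctx u φ => Sat S F P (solve S F u) φ

/-- A causal deontic model: recursive structural functions, a priority
structure which is a strict partial order, and an actual assignment complying
with the structural functions. -/
structure CDModel (S : Signature) where
  F : StructFns S
  P : Priority S
  A : Assignment S
  recF : Recursive S F
  strictP : P.Strict
  compliesA : Complies S F A

/-- Truth in a causal deontic model. -/
def CDModel.Sat {S : Signature} (M : CDModel S) (φ : Formula S) : Prop :=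
  _root_.Sat S M.F M.P M.A φ

/-- The merged intervention `X⃗' = x⃗', Y⃗ = y⃗`, where `X⃗' = x⃗'` is the
restriction of `X⃗ = x⃗` to the variables of `X⃗` that do not occur in `Y⃗`. -/
def mergeIvn {S : Signature} (l₁ l₂ : Ivn S) : Ivn S :=
  (l₁.filter fun p => decide (p.1 ∉ Ivn.fsts l₂)) ++ l₂

/-! ### Auxiliary lemmas -/

attribute [local instance] Classical.propDecidable

/-- Build a solution by well-founded recursion along the strict order. -/
noncomputable def buildA (S : Signature) (F : StructFns S)
    (lt : (S.U ⊕ S.V) → (S.U ⊕ S.V) → Prop) (wf : WellFounded lt)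
    (u : ExoSetting S) : Assignment S :=
  wf.fix (fun X rec =>
    match X, rec with
    | Sum.inl a, _ => u a
    | Sum.inr v, rec =>
        F v (fun Y _ => if h : lt Y (Sum.inr v) then rec Y h else
          Classical.arbitrary (S.R Y)))

lemma buildA_eq (S : Signature) (F : StructFns S)
    (lt : (S.U ⊕ S.V) → (S.U ⊕ S.V) → Prop) (wf : WellFounded lt)
    (u : ExoSetting S) (X : S.U ⊕ S.V) :
    buildA S F lt wf u X =
      match X with
      | Sum.inl a => u a
      | Sum.inr v =>
          F v (fun Y _ => if _ : lt Y (Sum.inr v) then buildA S F lt wf u Y else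
            Classical.arbitrary (S.R Y)) := by
  rw [buildA, WellFounded.fix_eq]
  cases X <;> rfl

lemma exists_solution (S : Signature) (F : StructFns S) (hF : Recursive S F)
    (u : ExoSetting S) :
    ∃ A : Assignment S, Complies S F A ∧ ∀ X : S.U, A (Sum.inl X) = u X := by
  obtain ⟨lt, hsto, hdep⟩ := hF
  haveI : IsTrans _ lt := ⟨hsto.trans⟩
  haveI : IsIrrefl _ lt := ⟨hsto.irrefl⟩
  have wf : WellFounded lt := Finite.wellFounded_of_trans_of_irrefl lt
  refine ⟨buildA S F lt wf u, ?_, fun X => by rw [buildA_eq]⟩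
  intro v
  rw [buildA_eq]
  exact hdep v _ _ (fun Y hne hlt => by simp [hlt, Assignment.minus])

lemma solve_spec (S : Signature) (F : StructFns S) (hF : Recursive S F)
    (u : ExoSetting S) :
    Complies S F (solve S F u) ∧ ∀ X : S.U, solve S F u (Sum.inl X) = u X := by
  have h := exists_solution S F hF u
  rw [solve, dif_pos h]
  exact h.choose_spec

lemma recursive_applyIvn (S : Signature) (F : StructFns S) (hF : Recursive S F)
    (l : Ivn S) : Recursive S (applyIvn S F l) := by
  obtain ⟨lt, hsto, hdep⟩ := hF
  refine ⟨lt, hsto, fun X B B' hBB' => ?_⟩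
  by_cases h : ∃ x : S.R (Sum.inr X), (⟨X, x⟩ : (Y : S.V) × S.R (Sum.inr Y)) ∈ l
  · rw [applyIvn, dif_pos h, applyIvn, dif_pos h]
  · rw [applyIvn, dif_neg h, applyIvn, dif_neg h]
    exact hdep X B B' hBB'

lemma ivn_unique {S : Signature} {l : Ivn S} (hl : Ivn.Distinct l)
    {X : S.V} {x y : S.R (Sum.inr X)}
    (hx : (⟨X, x⟩ : (Y : S.V) × S.R (Sum.inr Y)) ∈ l)
    (hy : (⟨X, y⟩ : (Y : S.V) × S.R (Sum.inr Y)) ∈ l) : x = y := by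
  have := List.inj_on_of_nodup_map hl hx hy rfl
  exact (Sigma.mk.inj_iff.mp this).2.eq

lemma mem_fsts {S : Signature} {l : Ivn S} {X : S.V} :
    X ∈ Ivn.fsts l ↔ ∃ x : S.R (Sum.inr X), (⟨X, x⟩ : (Y : S.V) × S.R (Sum.inr Y)) ∈ l := by
  constructor
  · intro h
    obtain ⟨p, hp, hpx⟩ := List.mem_map.mp h
    exact ⟨hpx ▸ p.2, by cases p; cases hpx; exact hp⟩
  · rintro ⟨x, hx⟩
    exact List.mem_map.mpr ⟨⟨X, x⟩, hx, rfl⟩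

lemma applyIvn_merge (S : Signature) (F : StructFns S) (l₁ l₂ : Ivn S)
    (h₁ : Ivn.Distinct l₁) (h₂ : Ivn.Distinct l₂) :
    applyIvn S (applyIvn S F l₁) l₂ = applyIvn S F (mergeIvn l₁ l₂) := by
  funext X B
  by_cases hx2 : ∃ x : S.R (Sum.inr X), (⟨X, x⟩ : (Y : S.V) × S.R (Sum.inr Y)) ∈ l₂
  · have hxm : ∃ x : S.R (Sum.inr X),
        (⟨X, x⟩ : (Y : S.V) × S.R (Sum.inr Y)) ∈ mergeIvn l₁ l₂ := by
      obtain ⟨x, hx⟩ := hx2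
      exact ⟨x, List.mem_append_right _ hx⟩
    rw [applyIvn, dif_pos hx2]
    conv_rhs => rw [applyIvn, dif_pos hxm]
    -- hxm.choose ∈ mergeIvn; it cannot be in the filtered part
    have hmem := hxm.choose_spec
    rcases List.mem_append.mp hmem with hmem | hmem
    · have hfilt := List.of_mem_filter hmem
      simp only [decide_eq_true_eq] at hfilt
      exact absurd (mem_fsts.mpr hx2) hfilt
    · exact ivn_unique h₂ hx2.choose_spec hmem
  · by_cases hx1 : ∃ x : S.R (Sum.inr X), (⟨X, x⟩ : (Y : S.V) × S.R (Sum.inr Y)) ∈ l₁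
    · have hxm : ∃ x : S.R (Sum.inr X),
          (⟨X, x⟩ : (Y : S.V) × S.R (Sum.inr Y)) ∈ mergeIvn l₁ l₂ := by
        obtain ⟨x, hx⟩ := hx1
        refine ⟨x, List.mem_append_left _ (List.mem_filter.mpr ⟨hx, ?_⟩)⟩
        simpa using fun h => hx2 (mem_fsts.mp h)
      rw [applyIvn, dif_neg hx2, applyIvn, dif_pos hx1]
      conv_rhs => rw [applyIvn, dif_pos hxm]
      have hmem := hxm.choose_spec
      rcases List.mem_append.mp hmem with hmem | hmem
      · exact ivn_unique h₁ hx1.choose_spec (List.mem_of_mem_filter hmem)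
      · exact absurd ⟨_, hmem⟩ hx2
    · have hxm : ¬ ∃ x : S.R (Sum.inr X),
          (⟨X, x⟩ : (Y : S.V) × S.R (Sum.inr Y)) ∈ mergeIvn l₁ l₂ := by
        rintro ⟨x, hx⟩
        rcases List.mem_append.mp hx with hx | hx
        · exact hx1 ⟨x, List.mem_of_mem_filter hx⟩
        · exact hx2 ⟨x, hx⟩
      rw [applyIvn, dif_neg hx2, applyIvn, dif_neg hx1]
      conv_rhs => rw [applyIvn, dif_neg hxm]

/-- validity of the axiom `A_[][]` for merging interventions: for
every causal deontic model `M_D`, all tuples `X⃗`, `Y⃗` of distinct endogenous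
variables with values `x⃗`, `y⃗`, and every formula `φ`:
`M_D ⊨ [X⃗=x⃗][Y⃗=y⃗]φ` iff `M_D ⊨ [X⃗'=x⃗', Y⃗=y⃗]φ`, where `X⃗'=x⃗'` is the
restriction of `X⃗=x⃗` to the variables in `X⃗` that do not occur in `Y⃗`. -/
theorem merge_interventions_valid (S : Signature) (M : CDModel S)
    (l₁ l₂ : Ivn S) (h₁ : Ivn.Distinct l₁) (h₂ : Ivn.Distinct l₂) (φ : Formula S) :
    M.Sat (.intervene l₁ (.intervene l₂ φ)) ↔ M.Sat (.intervene (mergeIvn l₁ l₂) φ) := by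
  have hrec₁ : Recursive S (applyIvn S M.F l₁) := recursive_applyIvn S M.F M.recF l₁
  have hexo : (fun X => solve S (applyIvn S M.F l₁) (fun Y => M.A (Sum.inl Y)) (Sum.inl X))
      = fun X => M.A (Sum.inl X) := by
    funext X
    exact (solve_spec S _ hrec₁ _).2 X
  show Sat S _ _ _ _ ↔ Sat S _ _ _ _
  simp only [Sat, hexo, applyIvn_merge S M.F l₁ l₂ h₁ h₂]
end

section
/- (Validity of the axiom Incl.) For every causal deontic model M_D=(S,F,P,A), every exogenous setting u, and every formula φ: if the actual assignment A agrees with u on the exogenous variables and M_D ⊨ φ, then M_D ⊨ φ^u. -/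
namespace Recursive

variable {S : Signature} {F : StructFns S}

/-- Strong induction along the (finite, hence well-founded) order witnessing recursiveness:
an endogenous variable is determined by the variables below it. -/
theorem eq_of_complies (hF : Recursive S F) {A A' : Assignment S} (hA : Complies S F A)
    (hA' : Complies S F A') (hexo : ∀ X : S.U, A (Sum.inl X) = A' (Sum.inl X)) : A = A' := by
  obtain ⟨lt, hlt, hdep⟩ := hF
  have hwf : WellFounded lt := Finite.wellFounded_of_trans_of_irrefl lt
  funext Y
  induction Y using hwf.induction with
  | _ Y ih =>
    cases Y with
    | inl X => exact hexo X
    | inr X =>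
      rw [hA X, hA' X]
      exact hdep X _ _ fun Z _ hZ => ih Z hZ

theorem solve_eq (hF : Recursive S F) {A : Assignment S} (hA : Complies S F A)
    {u : ExoSetting S} (hu : ∀ X : S.U, A (Sum.inl X) = u X) : solve S F u = A := by
  have hex : ∃ A : Assignment S, Complies S F A ∧ ∀ X : S.U, A (Sum.inl X) = u X :=
    ⟨A, hA, hu⟩
  rw [solve, dif_pos hex]
  exact hF.eq_of_complies hex.choose_spec.1 hA fun X => (hex.choose_spec.2 X).trans (hu X).symm

end Recursive

/-- validity of the axiom Incl: for every causal deontic model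
`M_D = (S, F, P, A)`, every exogenous setting `u`, and every formula `φ`: if the
actual assignment `A` agrees with `u` on the exogenous variables and `M_D ⊨ φ`,
then `M_D ⊨ φ^u`. -/
theorem incl_valid (S : Signature) (M : CDModel S) (u : ExoSetting S) (φ : Formula S)
    (hu : ∀ X : S.U, M.A (Sum.inl X) = u X) (hφ : M.Sat φ) :
    M.Sat (.ctx u φ) := by
  change Sat S M.F M.P (solve S M.F u) φ
  rwa [M.recF.solve_eq M.compliesA hu]
end
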